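/- Let G be a finite connected simple Hamiltonian graph on n ≥ 3 vertices with constant resistance curvature K (i.e., κ_i = K for all vertices i solves Ω κ = 1). Then K ≥ 6/(n²−1), the constant curvature of the cycle graph C_n. -/

import Mathlib

open Finset SimpleGraph Matrix

/-- The resistance matrix of a graph: `Ω i j = Γ⁻¹ i i + Γ⁻¹ j j - 2 Γ⁻¹ i j`
where `Γ = L + (1/n) J` with `L` the Laplacian and `J` the all-ones matrix. -/
noncomputable def resistanceMatrix {V : Type*} [Fintype V] [DecidableEq V]
    (G : SimpleGraph V) [DecidableRel G.Adj] : Matrix V V ℝ :=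
  Matrix.of fun i j =>
    letI Γinv := (G.lapMatrix ℝ + Matrix.of fun _ _ => (1 : ℝ) / Fintype.card V)⁻¹
    Γinv i i + Γinv j j - 2 * Γinv i j

/-
Writing `e = Pi.single i 1 - Pi.single j 1`, the resistance is `Ω i j = eᵀ Γ⁻¹ e`, and for
positive definite `Γ` this equals `max_x (2 eᵀx - xᵀ Γ x)`. Since `xᵀ Γ x ≥ xᵀ L x` is at least
the energy of `x` along a Hamiltonian cycle `ψ`, summation by parts against the unit flow along
the cycle (Thomson's principle) gives `Ω (ψ 0) (ψ d) ≤ d (n - d) / n`, the resistance in `C n`: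
this is Rayleigh monotonicity. Summing over `d`, every row sum of `Ω` is at most `(n² - 1) / 6`, and
`Ω κ = 1` with `κ ≡ K` forces `K` to be the inverse of a row sum.
-/

namespace Matrix

variable {ι R : Type*} [Fintype ι]

lemma dotProduct_inv_mulVec_le_of_forall [DecidableEq ι] [Field R] [LinearOrder R]
    [IsStrictOrderedRing R] {A : Matrix ι ι R} (hA : IsUnit A.det) (e : ι → R) {C : R}
    (h : ∀ x, 2 * (e ⬝ᵥ x) - x ⬝ᵥ (A *ᵥ x) ≤ C) : e ⬝ᵥ (A⁻¹ *ᵥ e) ≤ C := by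
  have hx : A *ᵥ (A⁻¹ *ᵥ e) = e := by rw [mulVec_mulVec, mul_nonsing_inv _ hA, one_mulVec]
  have := h (A⁻¹ *ᵥ e)
  rw [hx, dotProduct_comm (A⁻¹ *ᵥ e)] at this
  linarith

lemma IsSymm.dotProduct_mulVec_single_sub_single [DecidableEq ι] [CommRing R] {M : Matrix ι ι R}
    (hM : M.IsSymm) (i j : ι) :
    (Pi.single i 1 - Pi.single j 1) ⬝ᵥ (M *ᵥ (Pi.single i 1 - Pi.single j 1)) =
      M i i + M j j - 2 * M i j := by
  simp only [mulVec_sub, mulVec_single_one, sub_dotProduct, single_one_dotProduct,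
    Pi.sub_apply, col_apply, hM.apply j i]
  ring

end Matrix

namespace ZMod

variable {M : Type*} {m : ℕ} [NeZero m]

lemma sum_eq_sum_range [AddCommMonoid M] (f : ZMod m → M) :
    ∑ k, f k = ∑ r ∈ range m, f r :=
  Finset.sum_nbij' val (fun r => r) (fun k _ => mem_range.mpr k.val_lt) (fun _ _ => mem_univ _)
    (fun k _ => natCast_zmod_val k) (fun _ hr => val_cast_of_lt (mem_range.mp hr))
    (fun k _ => by rw [natCast_zmod_val])

lemma sum_ite_val_lt [AddCommMonoid M] {d : ℕ} (hd : d ≤ m) (f : ZMod m → M) :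
    ∑ k, (if k.val < d then f k else 0) = ∑ r ∈ range d, f r := by
  rw [sum_eq_sum_range, ← sum_filter]
  refine sum_congr ?_ fun _ _ => rfl
  ext r
  simp only [mem_filter, mem_range]
  constructor
  · rintro ⟨hr, h⟩
    rwa [val_cast_of_lt hr] at h
  · intro h
    exact ⟨h.trans_le hd, by rwa [val_cast_of_lt (h.trans_le hd)]⟩

end ZMod

/-- The unit flow from `0` to `d` on the cycle `ZMod m`, with `cycleUnitFlow m d k` on the edge
`k → k + 1`: it carries `(m - d) / m` along `0 → 1 → ⋯ → d` and `d / m` along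
`0 → m - 1 → ⋯ → d`. -/
noncomputable def cycleUnitFlow (m d : ℕ) (k : ZMod m) : ℝ :=
  (if k.val < d then 1 else 0) - d / m

section cycleUnitFlow

variable {m d : ℕ} [NeZero m]

lemma sum_sub_mul_cycleUnitFlow (hd : d ≤ m) (y : ZMod m → ℝ) :
    ∑ k, (y k - y (k + 1)) * cycleUnitFlow m d k = y 0 - y d := by
  have hshift : ∑ k, y (k + 1) = ∑ k, y k := Equiv.sum_comp (Equiv.addRight (1 : ZMod m)) y
  have htelescope : ∑ k, (if k.val < d then y k - y (k + 1) else 0) = y 0 - y d := by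
    rw [ZMod.sum_ite_val_lt hd]
    simpa only [Nat.cast_succ, Nat.cast_zero] using sum_range_sub' (fun r : ℕ => y r) d
  simp only [cycleUnitFlow, mul_sub, mul_ite, mul_one, mul_zero, sum_sub_distrib, ← sum_mul,
    hshift, sub_self, zero_mul, sub_zero]
  exact htelescope

lemma sum_cycleUnitFlow_sq (hd : d ≤ m) :
    ∑ k, cycleUnitFlow m d k ^ 2 = d * (m - d) / m := by
  have hm : (m : ℝ) ≠ 0 := NeZero.ne _
  have hsq : ∀ k : ZMod m, cycleUnitFlow m d k ^ 2 =
      (if k.val < d then (1 : ℝ) - 2 * d / m else 0) + (d / m) ^ 2 := fun k => by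
    unfold cycleUnitFlow
    split_ifs <;> ring
  simp only [hsq, sum_add_distrib, ZMod.sum_ite_val_lt hd, sum_const, card_range, card_univ,
    ZMod.card, nsmul_eq_mul]
  field_simp
  ring

end cycleUnitFlow

lemma sum_range_mul_sub_div (n : ℕ) (hn : n ≠ 0) :
    ∑ r ∈ range n, (r : ℝ) * (n - r) / n = ((n : ℝ) ^ 2 - 1) / 6 := by
  have hsum : ∀ (c : ℝ) (m : ℕ), ∑ r ∈ range m, (r : ℝ) * (c - r) =
      c * m * (m - 1) / 2 - m * (m - 1) * (2 * m - 1) / 6 := fun c m => by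
    induction m with
    | zero => simp
    | succ m ih => rw [sum_range_succ, ih]; push_cast; ring
  have : (n : ℝ) ≠ 0 := Nat.cast_ne_zero.mpr hn
  rw [← sum_div, hsum]
  field_simp
  ring

namespace SimpleGraph

namespace Walk

variable {V : Type*} {G : SimpleGraph V} {u : V}

lemma getVert_val_add_one (p : G.Walk u u) [NeZero p.length] (k : ZMod p.length) :
    p.getVert (k + 1).val = p.getVert (k.val + 1) := by
  have hval : (k + 1).val = (k.val + 1) % p.length := by
    rw [← ZMod.val_natCast, Nat.cast_add, ZMod.natCast_zmod_val, Nat.cast_one]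
  rw [hval]
  rcases Nat.lt_or_eq_of_le (Nat.succ_le_of_lt k.val_lt) with h | h
  · rw [Nat.mod_eq_of_lt h]
  · rw [← Nat.succ_eq_add_one, h, Nat.mod_self, getVert_zero, getVert_length]

lemma IsCycle.injective_getVert_val {p : G.Walk u u} (hp : p.IsCycle) [NeZero p.length] :
    Function.Injective fun k : ZMod p.length => p.getVert k.val := fun k l h =>
  ZMod.val_injective _ <| hp.getVert_injOn' (Nat.le_sub_one_of_lt k.val_lt)
    (Nat.le_sub_one_of_lt l.val_lt) h

end Walk

lemma IsHamiltonian.exists_bijective_zmod {V : Type*} [Fintype V] [DecidableEq V] [Nontrivial V]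
    {G : SimpleGraph V} (hG : G.IsHamiltonian) (v : V) :
    ∃ ψ : ZMod (Fintype.card V) → V,
      ψ.Bijective ∧ ψ 0 = v ∧ ∀ k, G.Adj (ψ k) (ψ (k + 1)) := by
  obtain ⟨p, hp⟩ := hG.exists_isHamiltonianCycle v
  have : NeZero p.length := ⟨(Walk.not_nil_iff_lt_length.mp hp.isCycle.not_nil).ne'⟩
  rw [← hp.length_eq]
  refine ⟨fun k => p.getVert k.val, ?_, by simp, fun k => ?_⟩
  · exact (Fintype.bijective_iff_injective_and_card _).mpr
      ⟨hp.isCycle.injective_getVert_val, by simp [hp.length_eq]⟩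
  · simp only [Walk.getVert_val_add_one]
    exact p.adj_getVert_succ k.val_lt

section Resistance

variable {V : Type*} [Fintype V] [DecidableEq V] (G : SimpleGraph V) [DecidableRel G.Adj]

noncomputable def regularizedLapMatrix : Matrix V V ℝ :=
  G.lapMatrix ℝ + of fun _ _ => (1 : ℝ) / Fintype.card V

lemma resistanceMatrix_apply (i j : V) :
    resistanceMatrix G i j = G.regularizedLapMatrix⁻¹ i i + G.regularizedLapMatrix⁻¹ j j -
      2 * G.regularizedLapMatrix⁻¹ i j :=
  rfl

lemma isSymm_regularizedLapMatrix : G.regularizedLapMatrix.IsSymm :=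
  (isSymm_lapMatrix ℝ G).add (IsSymm.ext fun _ _ => rfl)

lemma dotProduct_regularizedLapMatrix_mulVec (x : V → ℝ) :
    x ⬝ᵥ (G.regularizedLapMatrix *ᵥ x) =
      x ⬝ᵥ (G.lapMatrix ℝ *ᵥ x) + (∑ i, x i) ^ 2 / Fintype.card V := by
  rw [regularizedLapMatrix, add_mulVec, dotProduct_add]
  congr 1
  simp only [dotProduct, mulVec, of_apply, ← Finset.mul_sum, ← Finset.sum_mul]
  ring

lemma posDef_regularizedLapMatrix (hG : G.Connected) : G.regularizedLapMatrix.PosDef := by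
  refine posDef_iff_dotProduct_mulVec.mpr ⟨?_, fun x hx => ?_⟩
  · rw [IsHermitian, conjTranspose_eq_transpose_of_trivial]
    exact G.isSymm_regularizedLapMatrix
  rw [star_trivial, dotProduct_regularizedLapMatrix_mulVec]
  have hL : 0 ≤ x ⬝ᵥ (G.lapMatrix ℝ *ᵥ x) := by
    simpa using (posSemidef_lapMatrix ℝ G).dotProduct_mulVec_nonneg x
  rcases hL.lt_or_eq with hL | hL
  · positivity
  have hconst : ∀ i j, x i = x j := fun i j =>
    (lapMatrix_toLinearMap₂'_apply'_eq_zero_iff_forall_reachable G x).mp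
      (by rw [toLinearMap₂'_apply', ← hL]) i j (hG.preconnected i j)
  obtain ⟨i₀⟩ := hG.nonempty
  have hsum : ∑ i, x i = Fintype.card V * x i₀ := by
    simp [hconst _ i₀]
  have hx₀ : x i₀ ≠ 0 := fun h => hx (funext fun i => by rw [hconst i i₀, h, Pi.zero_apply])
  rw [← hL, zero_add, hsum]
  have : (0 : ℝ) < Fintype.card V := by exact_mod_cast Fintype.card_pos_iff.mpr ⟨i₀⟩
  positivity

lemma resistanceMatrix_eq_dotProduct (i j : V) :
    resistanceMatrix G i j = (Pi.single i 1 - Pi.single j 1) ⬝ᵥ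
      (G.regularizedLapMatrix⁻¹ *ᵥ (Pi.single i 1 - Pi.single j 1)) := by
  rw [resistanceMatrix_apply, IsSymm.dotProduct_mulVec_single_sub_single]
  exact G.isSymm_regularizedLapMatrix.inv

lemma resistanceMatrix_nonneg (hG : G.Connected) (i j : V) : 0 ≤ resistanceMatrix G i j := by
  rw [resistanceMatrix_eq_dotProduct]
  simpa only [star_trivial] using
    (G.posDef_regularizedLapMatrix hG).inv.posSemidef.dotProduct_mulVec_nonneg
      (Pi.single i 1 - Pi.single j 1)

lemma sum_sq_sub_le_dotProduct_lapMatrix_mulVec {m : ℕ} [NeZero m] (hm : 3 ≤ m)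
    {ψ : ZMod m → V} (hψ : ψ.Injective) (hadj : ∀ k, G.Adj (ψ k) (ψ (k + 1))) (x : V → ℝ) :
    ∑ k, (x (ψ k) - x (ψ (k + 1))) ^ 2 ≤ x ⬝ᵥ (G.lapMatrix ℝ *ᵥ x) := by
  set E : V → V → ℝ := fun i j => if G.Adj i j then (x i - x j) ^ 2 else 0 with hE
  have hE_nonneg : ∀ i j, 0 ≤ E i j := fun i j => by positivity
  have htwo : (2 : ZMod m) ≠ 0 := by
    rw [← Nat.cast_two, Ne, ZMod.natCast_eq_zero_iff]
    exact fun h => by have := Nat.le_of_dvd two_pos h; omega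
  have hpair : ∀ k, E (ψ k) (ψ (k + 1)) + E (ψ k) (ψ (k - 1)) ≤ ∑ j, E (ψ k) j := fun k => by
    rw [← sum_pair (hψ.ne fun h => htwo (by linear_combination h))]
    exact sum_le_univ_sum_of_nonneg (hE_nonneg _)
  have hback : ∑ k, E (ψ k) (ψ (k - 1)) = ∑ k, (x (ψ k) - x (ψ (k + 1))) ^ 2 := by
    rw [← Equiv.sum_comp (Equiv.addRight (1 : ZMod m))]
    refine sum_congr rfl fun k _ => ?_
    simp only [Equiv.coe_addRight, add_sub_cancel_right, hE, if_pos (hadj k).symm]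
    ring
  rw [← toLinearMap₂'_apply', lapMatrix_toLinearMap₂', le_div_iff₀ two_pos]
  calc (∑ k, (x (ψ k) - x (ψ (k + 1))) ^ 2) * 2
      = ∑ k, (E (ψ k) (ψ (k + 1)) + E (ψ k) (ψ (k - 1))) := by
        rw [sum_add_distrib, hback, mul_two]
        exact congrArg (· + _) (sum_congr rfl fun k _ => (if_pos (hadj k)).symm)
    _ ≤ ∑ k, ∑ j, E (ψ k) j := sum_le_sum fun k _ => hpair k
    _ ≤ ∑ i, ∑ j, E i j := by
        rw [← sum_image (f := fun i => ∑ j, E i j) hψ.injOn]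
        exact sum_le_univ_sum_of_nonneg fun i => sum_nonneg fun j _ => hE_nonneg i j

lemma resistanceMatrix_le_of_cycle (hG : G.Connected) {m : ℕ} [NeZero m] (hm : 3 ≤ m)
    {ψ : ZMod m → V} (hψ : ψ.Injective) (hadj : ∀ k, G.Adj (ψ k) (ψ (k + 1))) {d : ℕ}
    (hd : d ≤ m) : resistanceMatrix G (ψ 0) (ψ d) ≤ d * (m - d) / m := by
  have hΓ := G.posDef_regularizedLapMatrix hG
  rw [resistanceMatrix_eq_dotProduct, ← sum_cycleUnitFlow_sq hd]
  refine dotProduct_inv_mulVec_le_of_forall (isUnit_iff_ne_zero.mpr hΓ.det_pos.ne') _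
    fun x => ?_
  set a : ZMod m → ℝ := fun k => x (ψ k) - x (ψ (k + 1))
  have hflow : (Pi.single (ψ 0) 1 - Pi.single (ψ d) 1) ⬝ᵥ x = ∑ k, a k * cycleUnitFlow m d k := by
    rw [sub_dotProduct, single_one_dotProduct, single_one_dotProduct]
    exact (sum_sub_mul_cycleUnitFlow hd (x ∘ ψ)).symm
  have henergy : ∑ k, a k ^ 2 ≤ x ⬝ᵥ (G.regularizedLapMatrix *ᵥ x) := by
    rw [dotProduct_regularizedLapMatrix_mulVec]
    have := G.sum_sq_sub_le_dotProduct_lapMatrix_mulVec hm hψ hadj x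
    have : 0 ≤ (∑ i, x i) ^ 2 / Fintype.card V := by positivity
    linarith
  calc 2 * ((Pi.single (ψ 0) 1 - Pi.single (ψ d) 1) ⬝ᵥ x) - x ⬝ᵥ (G.regularizedLapMatrix *ᵥ x)
      ≤ ∑ k, (2 * (a k * cycleUnitFlow m d k) - a k ^ 2) := by
        rw [hflow, sum_sub_distrib, ← mul_sum]
        linarith
    _ ≤ ∑ k, cycleUnitFlow m d k ^ 2 :=
        sum_le_sum fun k _ => by nlinarith [sq_nonneg (a k - cycleUnitFlow m d k)]

lemma sum_resistanceMatrix_le_of_isHamiltonian (hG : G.Connected) (hH : G.IsHamiltonian)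
    (hn : 3 ≤ Fintype.card V) (i : V) :
    ∑ j, resistanceMatrix G i j ≤ ((Fintype.card V : ℝ) ^ 2 - 1) / 6 := by
  have : Nontrivial V := Fintype.one_lt_card_iff_nontrivial.mp (by omega)
  have : NeZero (Fintype.card V) := ⟨by omega⟩
  obtain ⟨ψ, hψ, rfl, hadj⟩ := hH.exists_bijective_zmod i
  calc ∑ j, resistanceMatrix G (ψ 0) j
      = ∑ r ∈ range (Fintype.card V), resistanceMatrix G (ψ 0) (ψ r) := by
        rw [← hψ.sum_comp, ZMod.sum_eq_sum_range]
    _ ≤ ∑ r ∈ range (Fintype.card V),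
          (r : ℝ) * (Fintype.card V - r) / Fintype.card V :=
        sum_le_sum fun r hr =>
          G.resistanceMatrix_le_of_cycle hG hn hψ.injective hadj (mem_range.mp hr).le
    _ = _ := sum_range_mul_sub_div _ (by omega)

end Resistance

end SimpleGraph

/-- A connected Hamiltonian graph on `n ≥ 3` vertices with constant resistance
curvature `K` satisfies `K ≥ 6/(n²-1)`, the constant curvature of the cycle `C n`. -/
theorem hamiltonian_constant_curvature_ge_cycle
    {V : Type*} [Fintype V] [DecidableEq V]
    (G : SimpleGraph V) [DecidableRel G.Adj]
    (hconn : G.Connected) (hn : 3 ≤ Fintype.card V)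
    (hham : G.IsHamiltonian)
    (K : ℝ) (hκ : resistanceMatrix G *ᵥ (fun _ => K) = fun _ => 1) :
    K ≥ 6 / ((Fintype.card V : ℝ) ^ 2 - 1) := by
  obtain ⟨i⟩ := hconn.nonempty
  have hrow : (∑ j, resistanceMatrix G i j) * K = 1 := by
    simpa [mulVec, dotProduct, sum_mul] using congrFun hκ i
  have hpos : 0 < ∑ j, resistanceMatrix G i j := by
    refine (sum_nonneg fun j _ => G.resistanceMatrix_nonneg hconn i j).lt_of_ne ?_
    intro h
    simp [← h] at hrow
  have hK : 0 < K := pos_of_mul_pos_right (hrow ▸ one_pos) hpos.le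
  have hle := G.sum_resistanceMatrix_le_of_isHamiltonian hconn hham hn i
  have hden : (0 : ℝ) < (Fintype.card V : ℝ) ^ 2 - 1 := by
    have : (3 : ℝ) ≤ Fintype.card V := by exact_mod_cast hn
    nlinarith
  rw [ge_iff_le, div_le_iff₀ hden]
  nlinarith [mul_le_mul_of_nonneg_left hle hK.le]
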